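/- arXiv:1311.3981 — 3 statements merged into one kernel-verified Lean document; each statement's English description precedes it below -/
import Mathlib

section
/- Let X_1, X_2, … be mutually independent nonnegative random variables with E(X_i) = 1 for all i, Var(X_i) ≤ C for all i for some constant C < ∞, and suppose there exist δ > 0 and c > 0 such that P(X_i > 1 + δ) ≥ c for all i. For each m, let π̂0^(m) be the EBF estimate computed from X_1, …, X_m. Then π̂0^(m) converges to 1 in probability as m → ∞. (This is the paper's Lemma 2: when π0 = 1, i.e., all tests are null so all Bayes factors have null expectation 1 and finite variance, the EBF procedure estimates π̂0 →^P 1 as the number of tests grows.) -/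
/-! If at least `k` of the values `b j` exceed `1 + δ` and their total is below `m + k δ`, then
the `m - k` smallest of them sum to less than `m - k`, so `d₀ ≥ m - k` and `|π̂₀ - 1| ≤ k / m`.
Take `k ≈ α m` with `0 < α < min ε c`. By Chebyshev's inequality, each condition fails with
probability `O(1 / m)`: the total `∑ X i` has mean `m` and variance at most `m C`, and the number
of exceedances has mean at least `c m` and variance at most `m / 4`. -/

open MeasureTheory ProbabilityTheory Filter

/-- Sum of the `d` smallest values among `b 1, …, b m` (the partial sum
`∑_{i=1}^{d} b_(i)` of the ascending order statistics). -/
noncomputable def sortedPartialSum {m : ℕ} (b : Fin m → ℝ) (d : ℕ) : ℝ :=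
  ∑ i ∈ Finset.univ.filter (fun i : Fin m => (i : ℕ) < d), b (Tuple.sort b i)

/-- The stopping index `d₀` of the EBF procedure: the largest `d ∈ {0,…,m}` with
`∑_{i=1}^{d} b_(i) < d` (equal to `0` if no `d ≥ 1` satisfies this). -/
noncomputable def ebfD0 {m : ℕ} (b : Fin m → ℝ) : ℕ :=
  sSup {d : ℕ | d ≤ m ∧ sortedPartialSum b d < d}

/-- The EBF estimate `π̂₀ = d₀ / m`. -/
noncomputable def ebfEstimate {m : ℕ} (b : Fin m → ℝ) : ℝ :=
  (ebfD0 b : ℝ) / m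

open Finset

section Deterministic

variable {m : ℕ}

lemma lt_sort_apply {α : Type*} [LinearOrder α] (b : Fin m → α) {t : α} {k : ℕ}
    (hk : k ≤ #{j | t < b j}) {i : Fin m} (hi : m - k ≤ i) : t < b (Tuple.sort b i) := by
  -- Read in reverse sorted order, `{i | t < b (sort b i)}` becomes a down-set of `Fin m`.
  set e : Equiv.Perm (Fin m) := Fin.revPerm.trans (Tuple.sort b)
  have hcard : #{j | t < b (e j)} = #{j | t < b j} := card_equiv e (by simp)
  have hdown : ∀ i j : Fin m, j ≤ i → t < b (e i) → t < b (e j) := fun i j hji h =>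
    h.trans_le (Tuple.monotone_sort b (Fin.rev_le_rev.2 hji))
  have := (Fin.lt_card_filter_univ_iff_apply_of_imp _ hdown (j := i.rev)).1 (by
    rw [hcard]; have := i.isLt; simp only [Fin.val_rev]; omega)
  simpa [e] using this

lemma ebfD0_le (b : Fin m → ℝ) : ebfD0 b ≤ m := by
  rcases Set.eq_empty_or_nonempty {d : ℕ | d ≤ m ∧ sortedPartialSum b d < d} with h | h
  · simp [ebfD0, h]
  · exact csSup_le h fun _ hd => hd.1

lemma le_ebfD0 (b : Fin m → ℝ) {d : ℕ} (hd : d ≤ m) (h : sortedPartialSum b d < d) :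
    d ≤ ebfD0 b :=
  le_csSup ⟨m, fun _ hd => hd.1⟩ ⟨hd, h⟩

lemma sortedPartialSum_le (b : Fin m → ℝ) {t : ℝ} {k : ℕ} (hk : k ≤ #{j | t < b j}) :
    sortedPartialSum b (m - k) ≤ ∑ j, b j - k * t := by
  have hkm : k ≤ m := hk.trans ((card_filter_le _ _).trans_eq (by simp))
  have hsplit : sortedPartialSum b (m - k) +
      ∑ i : Fin m with ¬ i.val < m - k, b (Tuple.sort b i) = ∑ j, b j := by
    rw [sortedPartialSum, sum_filter_add_sum_filter_not]
    exact Equiv.sum_comp _ b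
  have hcard : #{i : Fin m | ¬ i.val < m - k} = k := by
    rw [filter_not, card_sdiff_of_subset (filter_subset _ _), Fin.card_filter_val_lt]
    simp only [card_univ, Fintype.card_fin]
    omega
  have htop : k * t ≤ ∑ i : Fin m with ¬ i.val < m - k, b (Tuple.sort b i) := by
    have := card_nsmul_le_sum {i : Fin m | ¬ i.val < m - k} (fun i => b (Tuple.sort b i)) t
      fun i hi => (lt_sort_apply b hk (not_lt.1 (mem_filter.1 hi).2)).le
    rwa [hcard, nsmul_eq_mul] at this
  linarith

lemma abs_ebfEstimate_sub_one_le (b : Fin m → ℝ) {δ : ℝ} {k : ℕ}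
    (hk : k ≤ #{j | 1 + δ < b j}) (hsum : ∑ j, b j < m + k * δ) :
    |ebfEstimate b - 1| ≤ k / m := by
  rcases Nat.eq_zero_or_pos m with rfl | hm
  · simp_all
  have hkm : k ≤ m := hk.trans ((card_filter_le _ _).trans_eq (by simp))
  have hlow : m - k ≤ ebfD0 b := le_ebfD0 b (Nat.sub_le m k) (by
    push_cast [Nat.cast_sub hkm]
    linarith [sortedPartialSum_le b hk])
  have hlowR : (m : ℝ) - k ≤ ebfD0 b := by
    rw [← Nat.cast_sub hkm]; exact_mod_cast hlow
  have hmR : (0 : ℝ) < m := by exact_mod_cast hm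
  rw [ebfEstimate, abs_sub_comm, abs_of_nonneg (sub_nonneg.2 ((div_le_one hmR).2
    (by exact_mod_cast ebfD0_le b))), one_sub_div hmR.ne']
  exact div_le_div_of_nonneg_right (by linarith) hmR.le

end Deterministic

section Probabilistic

variable {Ω : Type*} [MeasurableSpace Ω] {P : Measure Ω}

lemma integral_indicator_Ioi_comp {Z : Ω → ℝ} (hZ : AEMeasurable Z P) (t : ℝ) :
    ∫ ω, (Set.Ioi t).indicator 1 (Z ω) ∂P = P.real {ω | t < Z ω} := by
  rw [← integral_map hZ (measurable_one.indicator measurableSet_Ioi).aestronglyMeasurable,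
    integral_indicator_one measurableSet_Ioi,
    map_measureReal_apply_of_aemeasurable hZ measurableSet_Ioi]
  rfl

variable [IsProbabilityMeasure P]

lemma measure_le_abs_sum_sub_integral_le {ι : Type*} {X : ι → Ω → ℝ} {s : Finset ι}
    {C r : ℝ} (hL2 : ∀ i ∈ s, MemLp (X i) 2 P)
    (hindep : Set.Pairwise ↑s fun i j => X i ⟂ᵢ[P] X j)
    (hvar : ∀ i ∈ s, variance (X i) P ≤ C) (hr : 0 < r) :
    P {ω | r ≤ |∑ i ∈ s, X i ω - P[∑ i ∈ s, X i]|} ≤ ENNReal.ofReal (#s * C / r ^ 2) := by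
  have hvar_sum : variance (∑ i ∈ s, X i) P ≤ #s * C := by
    rw [IndepFun.variance_sum hL2 hindep, ← nsmul_eq_mul]
    exact sum_le_card_nsmul _ _ _ hvar
  calc _ ≤ ENNReal.ofReal (variance (∑ i ∈ s, X i) P / r ^ 2) := by
        simpa using meas_ge_le_variance_div_sq (memLp_finsetSum' s hL2) hr
    _ ≤ _ := by gcongr

lemma measure_natCast_add_le_sum_le {X : ℕ → Ω → ℝ} {C r : ℝ} (hindep : iIndepFun X P)
    (hL2 : ∀ i, MemLp (X i) 2 P) (hmean : ∀ i, ∫ ω, X i ω ∂P = 1)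
    (hvar : ∀ i, variance (X i) P ≤ C) (m : ℕ) (hr : 0 < r) :
    P {ω | m + r ≤ ∑ j : Fin m, X j ω} ≤ ENNReal.ofReal (m * C / r ^ 2) := by
  have hmean_sum : P[∑ j : Fin m, X j] = (m : ℝ) := by
    simp only [Finset.sum_apply]
    rw [integral_finsetSum _ fun (j : Fin m) _ => (hL2 j).integrable one_le_two]
    simp [hmean]
  have := measure_le_abs_sum_sub_integral_le (s := univ) (X := fun j : Fin m => X j)
    (fun j _ => hL2 j) (fun i _ j _ hij => hindep.indepFun (Fin.val_injective.ne hij))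
    (fun j _ => hvar j) hr
  rw [card_univ, Fintype.card_fin, hmean_sum] at this
  refine (measure_mono fun ω (hω : m + r ≤ ∑ j : Fin m, X j ω) => ?_).trans this
  exact (show r ≤ ∑ j : Fin m, X j ω - m by linarith).trans (le_abs_self _)

lemma measure_card_filter_lt_le_le {X : ℕ → Ω → ℝ} {t c : ℝ} (hindep : iIndepFun X P)
    (hX : ∀ i, AEMeasurable (X i) P) (htail : ∀ i, ENNReal.ofReal c ≤ P {ω | t < X i ω})
    {m k : ℕ} (hk : k < c * m) :
    P {ω | #{j : Fin m | t < X j ω} ≤ k} ≤ ENNReal.ofReal (m / 4 / (c * m - k) ^ 2) := by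
  set Y : ℕ → Ω → ℝ := fun i ω => (Set.Ioi t).indicator 1 (X i ω)
  have hY_mem : ∀ i ω, Y i ω ∈ Set.Icc (0 : ℝ) 1 := fun i ω => by
    by_cases h : t < X i ω <;> simp [Y, h]
  have hY_meas : ∀ i, AEMeasurable (Y i) P := fun i =>
    (measurable_one.indicator measurableSet_Ioi).comp_aemeasurable (hX i)
  have hY_L2 : ∀ i, MemLp (Y i) 2 P := fun i =>
    memLp_of_bounded (ae_of_all _ (hY_mem i)) (hY_meas i).aestronglyMeasurable 2
  have hY_var : ∀ i, variance (Y i) P ≤ 1 / 4 := fun i =>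
    (variance_le_sq_of_bounded (ae_of_all _ (hY_mem i)) (hY_meas i)).trans_eq (by norm_num)
  have hY_mean : ∀ i, c ≤ P[Y i] := fun i => by
    rw [integral_indicator_Ioi_comp (hX i)]
    exact (ENNReal.ofReal_le_iff_le_toReal (measure_ne_top P _)).1 (htail i)
  have hmean_sum : c * m ≤ P[∑ j : Fin m, Y j] := by
    simp only [Finset.sum_apply]
    rw [integral_finsetSum _ fun (j : Fin m) _ => (hY_L2 j).integrable one_le_two]
    simpa [mul_comm] using
      card_nsmul_le_sum univ (fun j : Fin m => P[Y j]) c fun j _ => hY_mean j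
  have hcount : ∀ ω, (#{j : Fin m | t < X j ω} : ℝ) = ∑ j : Fin m, Y j ω := fun ω => by
    simp [Y, Set.indicator_apply]
  have := measure_le_abs_sum_sub_integral_le (s := univ) (X := fun j : Fin m => Y j)
    (fun j _ => hY_L2 j)
    (fun i _ j _ hij => (hindep.indepFun (Fin.val_injective.ne hij)).comp
      (measurable_one.indicator measurableSet_Ioi) (measurable_one.indicator measurableSet_Ioi))
    (fun j _ => hY_var j) (sub_pos.2 hk)
  rw [card_univ, Fintype.card_fin] at this
  refine (measure_mono fun ω (hω : #{j : Fin m | t < X j ω} ≤ k) => ?_).trans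
    (this.trans_eq (by ring_nf))
  have : ∑ j : Fin m, Y j ω ≤ k := by rw [← hcount]; exact_mod_cast hω
  exact (show c * m - k ≤ P[∑ j : Fin m, Y j] - ∑ j : Fin m, Y j ω by linarith).trans
    ((le_abs_self _).trans_eq (abs_sub_comm _ _))

lemma measure_lt_abs_ebfEstimate_sub_one_le {X : ℕ → Ω → ℝ} {C δ c ε : ℝ} (hδ : 0 < δ)
    (hindep : iIndepFun X P) (hmean : ∀ i, ∫ ω, X i ω ∂P = 1)
    (hL2 : ∀ i, MemLp (X i) 2 P) (hvar : ∀ i, variance (X i) P ≤ C)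
    (htail : ∀ i, ENNReal.ofReal c ≤ P {ω | 1 + δ < X i ω})
    {m k : ℕ} (hm : 0 < m) (hk : 0 < k) (hkε : k / m ≤ ε) (hkc : k / m < c) :
    P {ω | ε < |ebfEstimate (fun i : Fin m => X i ω) - 1|} ≤
      ENNReal.ofReal (m * C / (k * δ) ^ 2) + ENNReal.ofReal (m / 4 / (c * m - k) ^ 2) := by
  have hsub : {ω | ε < |ebfEstimate (fun i : Fin m => X i ω) - 1|} ⊆
      {ω | m + k * δ ≤ ∑ j : Fin m, X j ω} ∪ {ω | #{j : Fin m | 1 + δ < X j ω} ≤ k} := by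
    intro ω hω
    by_contra! h
    simp only [Set.mem_union, Set.mem_ofPred_eq, not_or, not_le] at h
    exact hω.not_ge ((abs_ebfEstimate_sub_one_le _ h.2.le h.1).trans hkε)
  calc _ ≤ _ := (measure_mono hsub).trans (measure_union_le _ _)
    _ ≤ _ := add_le_add
      (measure_natCast_add_le_sum_le hindep hL2 hmean hvar m (by positivity))
      (measure_card_filter_lt_le_le hindep (fun i => (hL2 i).aemeasurable) htail
        ((div_lt_iff₀ (Nat.cast_pos.2 hm)).1 hkc))

end Probabilistic

lemma tendsto_natCast_div_sq_atTop {ℓ : ℕ → ℝ} {L : ℝ} (hL : L ≠ 0)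
    (hℓ : Tendsto (fun m : ℕ => ℓ m / m) atTop (nhds L)) :
    Tendsto (fun m : ℕ => (m : ℝ) / ℓ m ^ 2) atTop (nhds 0) := by
  have hlim := (tendsto_inv_atTop_zero.comp tendsto_natCast_atTop_atTop).mul
    ((hℓ.pow 2).inv₀ (pow_ne_zero 2 hL))
  rw [zero_mul] at hlim
  refine hlim.congr' ((eventually_ne_atTop 0).mono fun m hm => ?_)
  have : (m : ℝ) ≠ 0 := Nat.cast_ne_zero.2 hm
  simp only [Function.comp_apply, div_pow, inv_div]
  field_simp

lemma tendsto_ebf_chebyshev_bound {k : ℕ → ℕ} {C δ c α : ℝ} (hδ : δ ≠ 0) (hα : α ≠ 0)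
    (hαc : α ≠ c) (hk : Tendsto (fun m : ℕ => (k m : ℝ) / m) atTop (nhds α)) :
    Tendsto (fun m : ℕ => ENNReal.ofReal (m * C / (k m * δ) ^ 2) +
      ENNReal.ofReal (m / 4 / (c * m - k m) ^ 2)) atTop (nhds 0) := by
  have hsum : Tendsto (fun m : ℕ => m * C / (k m * δ) ^ 2) atTop (nhds 0) := by
    have := (tendsto_natCast_div_sq_atTop (ℓ := fun m => k m * δ) (mul_ne_zero hα hδ)
      (by simpa only [mul_div_right_comm] using hk.mul_const δ)).const_mul C
    rw [mul_zero] at this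
    exact this.congr fun m => by ring
  have hcount : Tendsto (fun m : ℕ => m / 4 / (c * m - k m) ^ 2) atTop (nhds 0) := by
    have hratio : Tendsto (fun m : ℕ => (c * m - k m) / m) atTop (nhds (c - α)) :=
      (hk.const_sub c).congr' ((eventually_ne_atTop 0).mono fun m hm => by
        field_simp [Nat.cast_ne_zero.2 hm])
    have := (tendsto_natCast_div_sq_atTop (sub_ne_zero.2 hαc.symm) hratio).div_const 4
    simpa only [zero_div, div_right_comm] using this
  simpa using (ENNReal.tendsto_ofReal hsum).add (ENNReal.tendsto_ofReal hcount)

theorem ebf_estimate_tendsto_one_of_all_null_general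
    {Ω : Type*} [MeasurableSpace Ω] (P : Measure Ω) [IsProbabilityMeasure P]
    (X : ℕ → Ω → ℝ) (C δ c : ℝ) (hδ : 0 < δ) (hc : 0 < c)
    (hindep : iIndepFun X P)
    (hmean : ∀ i, ∫ ω, X i ω ∂P = 1)
    (hL2 : ∀ i, MemLp (X i) 2 P)
    (hvar : ∀ i, variance (X i) P ≤ C)
    (htail : ∀ i, ENNReal.ofReal c ≤ P {ω | 1 + δ < X i ω}) :
    ∀ ε > (0:ℝ),
      Tendsto (fun m => P {ω | ε < |ebfEstimate (fun i : Fin m => X i ω) - 1|})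
        atTop (nhds 0) := by
  intro ε hε
  set α := min ε c / 2
  have hα : 0 < α := half_pos (lt_min hε hc)
  have hαε : α < ε := (half_lt_self (lt_min hε hc)).trans_le (min_le_left _ _)
  have hαc : α < c := (half_lt_self (lt_min hε hc)).trans_le (min_le_right _ _)
  have hk : Tendsto (fun m : ℕ => (⌈α * m⌉₊ : ℝ) / m) atTop (nhds α) :=
    (tendsto_nat_ceil_mul_div_atTop hα.le).comp tendsto_natCast_atTop_atTop
  refine tendsto_of_tendsto_of_tendsto_of_le_of_le' tendsto_const_nhds
    (tendsto_ebf_chebyshev_bound (C := C) hδ.ne' hα.ne' hαc.ne hk)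
    (Eventually.of_forall fun _ => zero_le) ?_
  filter_upwards [hk.eventually (gt_mem_nhds hαε), hk.eventually (gt_mem_nhds hαc),
    eventually_gt_atTop 0] with m hkε hkc hm
  exact measure_lt_abs_ebfEstimate_sub_one_le hδ hindep hmean hL2 hvar htail hm
    (Nat.ceil_pos.2 (by positivity)) hkε.le hkc

/-- **Lemma 2 (Wen, 2013).** When all tests are null (`π₀ = 1`): if `X₁, X₂, …` are
mutually independent nonnegative random variables with `E(Xᵢ) = 1`, variance bounded by
a common constant `C`, and `P(Xᵢ > 1 + δ) ≥ c > 0` for all `i`, then the EBF estimate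
`π̂₀⁽ᵐ⁾` computed from `X₁, …, X_m` converges to `1` in probability as `m → ∞`. -/
theorem ebf_estimate_tendsto_one_of_all_null
    {Ω : Type*} [MeasurableSpace Ω] (P : Measure Ω) [IsProbabilityMeasure P]
    (X : ℕ → Ω → ℝ) (C δ c : ℝ) (hδ : 0 < δ) (hc : 0 < c)
    (hmeas : ∀ i, Measurable (X i))
    (hnonneg : ∀ i ω, 0 ≤ X i ω)
    (hindep : iIndepFun X P)
    (hint : ∀ i, Integrable (X i) P)
    (hmean : ∀ i, ∫ ω, X i ω ∂P = 1)
    (hL2 : ∀ i, MemLp (X i) 2 P)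
    (hvar : ∀ i, variance (X i) P ≤ C)
    (htail : ∀ i, ENNReal.ofReal c ≤ P {ω | 1 + δ < X i ω}) :
    ∀ ε > (0:ℝ),
      Tendsto (fun m => P {ω | ε < |ebfEstimate (fun i : Fin m => X i ω) - 1|})
        atTop (nhds 0) :=
  ebf_estimate_tendsto_one_of_all_null_general P X C δ c hδ hc hindep hmean hL2 hvar htail
end

section
/- Fix π0 ∈ [0,1], a constant C < ∞, and δ > 0, c > 0. For each m, let X_{m,1}, …, X_{m,m} be mutually independent nonnegative random variables and let N_m ⊆ {1, …, m} be a (null) index set with |N_m| ≥ π0·m, such that for every i ∈ N_m: E(X_{m,i}) = 1, Var(X_{m,i}) ≤ C, and P(X_{m,i} > 1 + δ) ≥ c; the variables with indices outside N_m are arbitrary nonnegative random variables (independent of the rest). Let π̂0^(m) be the EBF estimate computed from X_{m,1}, …, X_{m,m}. Then for every ε > 0, P(π̂0^(m) ≥ π0 − ε) → 1 as m → ∞. (This is the paper's Proposition 1: for a mixture of null and alternative models, the EBF estimate is an asymptotic upper bound for the true null proportion π0, provided the number of null tests is sufficiently large.) -/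
open MeasureTheory ProbabilityTheory Filter

/-!
Let `n = |N_m| ≥ π₀ m`. By Chebyshev's inequality, with probability tending to one the null
Bayes factors sum to less than `n + δηm`, and at least `ηm` of them exceed `1 + δ`, since their
number has mean at least `c n`. Discarding `⌈ηm⌉` of these exceedances leaves
`n - ⌈ηm⌉` values whose sum is below their number; as the `d` smallest values have the smallest
sum, `d₀ ≥ n - ηm - 1`, which is at least `(π₀ - ε) m` once `η ≤ ε / 2` and `m ≥ 2 / ε`.
-/

open Finset Topology

theorem Fin.val_le_of_strictMono {d m : ℕ} {f : Fin d → Fin m} (hf : StrictMono f) (j : Fin d) :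
    (j : ℕ) ≤ f j :=
  calc (j : ℕ) = #(Iio j) := (Fin.card_Iio j).symm
    _ ≤ #(Iio (f j)) :=
      card_le_card_of_injOn f (fun i hi => by simpa using hf (by simpa using hi)) hf.injective.injOn
    _ = f j := Fin.card_Iio _

theorem sum_val_lt_card_le_sum {M : Type*} [AddCommMonoid M] [PartialOrder M]
    [IsOrderedAddMonoid M] {m : ℕ} {g : Fin m → M} (hg : Monotone g) (S : Finset (Fin m)) :
    ∑ i ∈ univ.filter (fun i : Fin m => (i : ℕ) < #S), g i ≤ ∑ i ∈ S, g i := by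
  have hSm : #S ≤ m := by simpa using S.card_le_univ
  have hfirst : univ.filter (fun i : Fin m => (i : ℕ) < #S) = univ.map (Fin.castLEEmb hSm) := by
    ext i
    simp only [mem_filter, mem_univ, true_and, Finset.mem_map]
    exact ⟨fun hi => ⟨⟨i, hi⟩, rfl⟩, by rintro ⟨j, rfl⟩; exact j.isLt⟩
  conv_rhs => rw [← S.map_orderEmbOfFin_univ rfl]
  rw [hfirst, sum_map, sum_map]
  exact sum_le_sum fun j _ => hg (Fin.val_le_of_strictMono (S.orderEmbOfFin rfl).strictMono j)

theorem sortedPartialSum_card_le_sum {m : ℕ} (b : Fin m → ℝ) (S : Finset (Fin m)) :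
    sortedPartialSum b #S ≤ ∑ i ∈ S, b i := by
  have h := sum_val_lt_card_le_sum (Tuple.monotone_sort b) (S.map (Tuple.sort b).symm.toEmbedding)
  simpa [sortedPartialSum] using h

theorem card_le_ebfD0_of_sum_lt {m : ℕ} {b : Fin m → ℝ} {S : Finset (Fin m)}
    (h : ∑ i ∈ S, b i < #S) : #S ≤ ebfD0 b :=
  le_csSup ⟨m, fun _ hd => hd.1⟩
    ⟨by simpa using S.card_le_univ, (sortedPartialSum_card_le_sum b S).trans_lt h⟩

theorem card_sub_sub_one_lt_ebfD0 {m : ℕ} {b : Fin m → ℝ} {S : Finset (Fin m)} {δ r : ℝ}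
    (hδ : 0 ≤ δ) (hr : 0 ≤ r) (hcount : r ≤ #{i ∈ S | 1 + δ < b i})
    (hsum : ∑ i ∈ S, b i < #S + δ * r) :
    (#S : ℝ) - r - 1 < ebfD0 b := by
  obtain ⟨T, hT, hTcard⟩ := exists_subset_card_eq (Nat.ceil_le.2 hcount)
  have hTS : T ⊆ S := hT.trans (filter_subset _ _)
  have hTsum : #T • (1 + δ) ≤ ∑ i ∈ T, b i :=
    card_nsmul_le_sum _ _ _ fun i hi => (mem_filter.1 (hT hi)).2.le
  have hδr : δ * r ≤ δ * #T := mul_le_mul_of_nonneg_left (hTcard ▸ Nat.le_ceil r) hδ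
  have hsdiff : ∑ i ∈ S \ T, b i < #(S \ T) := by
    rw [sum_sdiff_eq_sub hTS, card_sdiff_of_subset hTS, Nat.cast_sub (card_le_card hTS)]
    rw [nsmul_eq_mul] at hTsum
    linarith
  calc (#S : ℝ) - r - 1 < #S - #T := by
        rw [hTcard]; linarith [Nat.ceil_lt_add_one hr]
    _ = #(S \ T) := by rw [card_sdiff_of_subset hTS, Nat.cast_sub (card_le_card hTS)]
    _ ≤ ebfD0 b := by exact_mod_cast card_le_ebfD0_of_sum_lt hsdiff

theorem ebfEstimate_nonneg {m : ℕ} (b : Fin m → ℝ) : 0 ≤ ebfEstimate b := by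
  unfold ebfEstimate; positivity

theorem sub_le_ebfEstimate_of_sum_lt {m : ℕ} {b : Fin m → ℝ} {S : Finset (Fin m)}
    {π₀ ε δ η : ℝ} (hδ : 0 ≤ δ) (hη : 0 ≤ η) (hηε : η ≤ ε / 2) (hεm : 2 ≤ ε * m)
    (hS : π₀ * m ≤ #S) (hcount : η * m ≤ #{i ∈ S | 1 + δ < b i})
    (hsum : ∑ i ∈ S, b i < #S + δ * (η * m)) :
    π₀ - ε ≤ ebfEstimate b := by
  have hm : (0 : ℝ) < m := Nat.cast_pos.2 (Nat.pos_of_ne_zero fun h => by norm_num [h] at hεm)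
  have hd0 := card_sub_sub_one_lt_ebfD0 hδ (by positivity) hcount hsum
  rw [ebfEstimate, le_div_iff₀ hm]
  linarith [mul_le_mul_of_nonneg_right hηε hm.le]

section Probability

variable {Ω : Type*} [MeasurableSpace Ω] {P : Measure Ω}

theorem measure_abs_sum_sub_sum_integral_ge_le [IsFiniteMeasure P] {ι : Type*} {s : Finset ι}
    {Y : ι → Ω → ℝ} (hY : ∀ i ∈ s, MemLp (Y i) 2 P)
    (hindep : Set.Pairwise ↑s fun i j => IndepFun (Y i) (Y j) P) {V t : ℝ}
    (hV : ∀ i ∈ s, variance (Y i) P ≤ V) (ht : 0 < t) :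
    P {ω | t ≤ |∑ i ∈ s, Y i ω - ∑ i ∈ s, P[Y i]|} ≤ ENNReal.ofReal (#s * V / t ^ 2) := by
  have hmean : P[∑ i ∈ s, Y i] = ∑ i ∈ s, P[Y i] := by
    simp only [Finset.sum_apply]
    exact integral_finsetSum s fun i hi => (hY i hi).integrable one_le_two
  have hvar : variance (∑ i ∈ s, Y i) P ≤ #s * V := by
    rw [IndepFun.variance_sum hY hindep, ← nsmul_eq_mul]
    exact sum_le_card_nsmul _ _ _ hV
  calc P {ω | t ≤ |∑ i ∈ s, Y i ω - ∑ i ∈ s, P[Y i]|}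
      = P {ω | t ≤ |(∑ i ∈ s, Y i) ω - P[∑ i ∈ s, Y i]|} := by
        rw [hmean]; simp only [Finset.sum_apply]
    _ ≤ ENNReal.ofReal (variance (∑ i ∈ s, Y i) P / t ^ 2) :=
        meas_ge_le_variance_div_sq (memLp_finsetSum' s hY) ht
    _ ≤ ENNReal.ofReal (#s * V / t ^ 2) := by gcongr

theorem tendsto_measure_abs_sum_sub_sum_integral_ge_mul [IsFiniteMeasure P]
    {s : (m : ℕ) → Finset (Fin m)} {Y : (m : ℕ) → Fin m → Ω → ℝ}
    (hY : ∀ m, ∀ i ∈ s m, MemLp (Y m i) 2 P)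
    (hindep : ∀ m, Set.Pairwise ↑(s m) fun i j => IndepFun (Y m i) (Y m j) P) {V a : ℝ}
    (hV : ∀ m, ∀ i ∈ s m, variance (Y m i) P ≤ V) (ha : 0 < a) :
    Tendsto (fun m : ℕ => P {ω | a * m ≤ |∑ i ∈ s m, Y m i ω - ∑ i ∈ s m, P[Y m i]|})
      atTop (𝓝 0) := by
  have hbound : Tendsto (fun m : ℕ => ENNReal.ofReal (max V 0 / a ^ 2 / m)) atTop (𝓝 0) := by
    simpa using ENNReal.tendsto_ofReal (tendsto_const_div_atTop_nhds_zero_nat (max V 0 / a ^ 2))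
  refine tendsto_of_tendsto_of_tendsto_of_le_of_le' tendsto_const_nhds hbound
    (Eventually.of_forall fun _ => bot_le) ?_
  filter_upwards [eventually_gt_atTop 0] with m hm
  have hsm : (#(s m) : ℝ) ≤ m := by exact_mod_cast (card_le_univ _).trans_eq (Fintype.card_fin m)
  refine (measure_abs_sum_sub_sum_integral_ge_le (hY m) (hindep m)
    (fun i hi => (hV m i hi).trans (le_max_left V 0)) (by positivity)).trans
    (ENNReal.ofReal_le_ofReal ?_)
  calc #(s m) * max V 0 / (a * m) ^ 2 ≤ m * max V 0 / (a * m) ^ 2 := by gcongr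
    _ = max V 0 / a ^ 2 / m := by field_simp

theorem tendsto_measure_nhds_one_of_compl_union_subset [IsProbabilityMeasure P]
    {A B E : ℕ → Set Ω} (hA : Tendsto (fun m => P (A m)) atTop (𝓝 0))
    (hB : Tendsto (fun m => P (B m)) atTop (𝓝 0)) (hE : ∀ᶠ m in atTop, (A m ∪ B m)ᶜ ⊆ E m) :
    Tendsto (fun m => P (E m)) atTop (𝓝 1) := by
  have hlower : Tendsto (fun m => 1 - (P (A m) + P (B m))) atTop (𝓝 1) := by
    have h := ENNReal.Tendsto.sub tendsto_const_nhds (by simpa using hA.add hB)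
      (Or.inl ENNReal.one_ne_top)
    rwa [tsub_zero] at h
  refine tendsto_of_tendsto_of_tendsto_of_le_of_le' hlower tendsto_const_nhds ?_
    (Eventually.of_forall fun _ => prob_le_one)
  filter_upwards [hE] with m hm
  calc 1 - (P (A m) + P (B m)) ≤ 1 - P (A m ∪ B m) := tsub_le_tsub_left (measure_union_le _ _) 1
    _ ≤ P (A m ∪ B m)ᶜ := by
        rw [tsub_le_iff_right, add_comm, ← measure_univ (μ := P)]; exact measure_univ_le_add_compl _
    _ ≤ P (E m) := measure_mono hm

theorem tendsto_measure_abs_card_filter_sub_ge_mul [IsProbabilityMeasure P]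
    {s : (m : ℕ) → Finset (Fin m)} {X : (m : ℕ) → Fin m → Ω → ℝ}
    (hX : ∀ m i, Measurable (X m i)) (hindep : ∀ m, iIndepFun (X m) P) (a : ℝ) {b : ℝ}
    (hb : 0 < b) :
    Tendsto (fun m : ℕ => P {ω | b * m ≤
      |(#{i ∈ s m | a < X m i ω} : ℝ) - ∑ i ∈ s m, P.real {ω | a < X m i ω}|}) atTop (𝓝 0) := by
  set φ : ℝ → ℝ := (Set.Ioi a).indicator 1
  have hφ : Measurable φ := measurable_one.indicator measurableSet_Ioi
  have hφ01 (x : ℝ) : φ x ∈ Set.Icc 0 1 := by by_cases h : a < x <;> simp [φ, h]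
  have hcount (m : ℕ) (ω : Ω) : ∑ i ∈ s m, φ (X m i ω) = #{i ∈ s m | a < X m i ω} := by
    simp only [φ, Set.indicator_apply, Set.mem_Ioi, Pi.one_apply]
    exact sum_boole _ _
  have hmean (m : ℕ) (i : Fin m) : ∫ ω, φ (X m i ω) ∂P = P.real {ω | a < X m i ω} :=
    integral_indicator_one ((hX m i) measurableSet_Ioi)
  have h := tendsto_measure_abs_sum_sub_sum_integral_ge_mul (s := s) (Y := fun m i => φ ∘ X m i)
    (fun m i _ => memLp_of_bounded (ae_of_all _ fun _ => hφ01 _)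
      (hφ.comp (hX m i)).aestronglyMeasurable 2)
    (fun m i _ j _ hij => ((hindep m).comp (fun _ => φ) fun _ => hφ).indepFun hij)
    (fun m i _ => variance_le_sq_of_bounded (ae_of_all _ fun _ => hφ01 _)
      (hφ.comp (hX m i)).aemeasurable) hb
  simpa only [Function.comp_apply, hcount, hmean] using h

end Probability

theorem ebf_estimate_asymptotic_upper_bound_general
    {Ω : Type*} [MeasurableSpace Ω] (P : Measure Ω) [IsProbabilityMeasure P]
    (π₀ : ℝ)
    (C δ c : ℝ) (hδ : 0 < δ) (hc : 0 < c)
    (X : (m : ℕ) → Fin m → Ω → ℝ) (N : (m : ℕ) → Finset (Fin m))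
    (hN : ∀ m, π₀ * m ≤ ((N m).card : ℝ))
    (hmeas : ∀ m i, Measurable (X m i))
    (hindep : ∀ m, iIndepFun (X m) P)
    (hmean : ∀ m, ∀ i ∈ N m, ∫ ω, X m i ω ∂P = 1)
    (hL2 : ∀ m, ∀ i ∈ N m, MemLp (X m i) 2 P)
    (hvar : ∀ m, ∀ i ∈ N m, variance (X m i) P ≤ C)
    (htail : ∀ m, ∀ i ∈ N m, ENNReal.ofReal c ≤ P {ω | 1 + δ < X m i ω}) :
    ∀ ε > (0:ℝ),
      Tendsto (fun m => P {ω | π₀ - ε ≤ ebfEstimate (fun i : Fin m => X m i ω)})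
        atTop (nhds 1) := by
  intro ε hε
  rcases le_or_gt π₀ ε with hπε | hπε
  · have huniv (m : ℕ) : {ω | π₀ - ε ≤ ebfEstimate (fun i : Fin m => X m i ω)} = Set.univ :=
      Set.eq_univ_of_forall fun _ => (sub_nonpos.2 hπε).trans (ebfEstimate_nonneg _)
    simp only [huniv, measure_univ, tendsto_const_nhds]
  have hπ₀ : 0 < π₀ := hε.trans hπε
  set η := min (ε / 2) (c * π₀ / 2)
  have hη : 0 < η := lt_min (by positivity) (by positivity)
  have hsum := tendsto_measure_abs_sum_sub_sum_integral_ge_mul hL2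
    (fun m i _ j _ hij => (hindep m).indepFun hij) hvar (mul_pos hδ hη)
  have hcount := tendsto_measure_abs_card_filter_sub_ge_mul (s := N) hmeas hindep (1 + δ)
    (by positivity : 0 < c * π₀ / 2)
  refine tendsto_measure_nhds_one_of_compl_union_subset hsum hcount ?_
  filter_upwards [(tendsto_natCast_atTop_atTop.const_mul_atTop hε).eventually_ge_atTop 2]
    with m hεm ω hω
  simp only [Set.compl_union, Set.mem_inter_iff, Set.mem_compl_iff, Set.mem_ofPred_eq, not_le,
    abs_lt] at hω
  obtain ⟨⟨-, hsum_lt⟩, ⟨hcount_gt, -⟩⟩ := hω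
  have hm : (0 : ℝ) ≤ m := m.cast_nonneg
  have hmeanX : ∑ i ∈ N m, P[X m i] = (#(N m) : ℝ) := by simp [sum_congr rfl (hmean m)]
  have htail_sum : c * #(N m) ≤ ∑ i ∈ N m, P.real {ω | 1 + δ < X m i ω} := by
    rw [mul_comm, ← nsmul_eq_mul]
    exact card_nsmul_le_sum _ _ _ fun i hi =>
      (ENNReal.ofReal_le_iff_le_toReal (measure_ne_top _ _)).1 (htail m i hi)
  refine sub_le_ebfEstimate_of_sum_lt hδ.le hη.le (min_le_left _ _) hεm (hN m) ?_ (by linarith)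
  linarith [mul_le_mul_of_nonneg_left (hN m) hc.le,
    mul_le_mul_of_nonneg_right (min_le_right (ε / 2) (c * π₀ / 2)) hm]

/-- **Proposition 1 (Wen, 2013).** For a mixture of null and alternative tests: if for
each `m` the Bayes factors `X_{m,1}, …, X_{m,m}` are mutually independent nonnegative
random variables and the null index set `N_m` has `|N_m| ≥ π₀·m`, where for `i ∈ N_m`
one has `E(X_{m,i}) = 1`, `Var(X_{m,i}) ≤ C`, and `P(X_{m,i} > 1 + δ) ≥ c`, then the
EBF estimate is an asymptotic upper bound for `π₀`:
`P(π̂₀⁽ᵐ⁾ ≥ π₀ − ε) → 1` for every `ε > 0`. -/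
theorem ebf_estimate_asymptotic_upper_bound
    {Ω : Type*} [MeasurableSpace Ω] (P : Measure Ω) [IsProbabilityMeasure P]
    (π₀ : ℝ) (hπ₀0 : 0 ≤ π₀) (hπ₀1 : π₀ ≤ 1)
    (C δ c : ℝ) (hδ : 0 < δ) (hc : 0 < c)
    (X : (m : ℕ) → Fin m → Ω → ℝ) (N : (m : ℕ) → Finset (Fin m))
    (hN : ∀ m, π₀ * m ≤ ((N m).card : ℝ))
    (hmeas : ∀ m i, Measurable (X m i))
    (hnonneg : ∀ m i ω, 0 ≤ X m i ω)
    (hindep : ∀ m, iIndepFun (X m) P)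
    (hint : ∀ m, ∀ i ∈ N m, Integrable (X m i) P)
    (hmean : ∀ m, ∀ i ∈ N m, ∫ ω, X m i ω ∂P = 1)
    (hL2 : ∀ m, ∀ i ∈ N m, MemLp (X m i) 2 P)
    (hvar : ∀ m, ∀ i ∈ N m, variance (X m i) P ≤ C)
    (htail : ∀ m, ∀ i ∈ N m, ENNReal.ofReal c ≤ P {ω | 1 + δ < X m i ω}) :
    ∀ ε > (0:ℝ),
      Tendsto (fun m => P {ω | π₀ - ε ≤ ebfEstimate (fun i : Fin m => X m i ω)})
        atTop (nhds 1) :=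
  ebf_estimate_asymptotic_upper_bound_general P π₀ C δ c hδ hc X N hN hmeas hindep hmean hL2 hvar
    htail
end

section
/- Let X_1, …, X_m be mutually independent random variables taking values in {0,1}, let γ ∈ (0,1], and let π0 ∈ [0,1] be such that (1/m) Σ_{i=1}^{m} E(X_i) ≥ π0·γ. Define π̂0 := (Σ_{i=1}^{m} X_i)/(m·γ). Then for every ε > 0, P(π̂0 ≤ π0 − ε) ≤ 1/(4 m γ² ε²); in particular, P(π̂0 ≥ π0 − ε) → 1 as m → ∞. (This is a precise finite-sample form of the paper's Proposition 2: the QBF estimate π̂0 = Σ_i I(BF_i ≤ q_{i,γ})/(mγ) is an asymptotic upper bound for π0, since under a mixture with null proportion π0 the indicators I(BF_i ≤ q_{i,γ}) have average mean π0γ + (1−π0)·(1/m)Σ_i F_i^1(q_{i,γ}) ≥ π0γ.) -/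
/-!
Chebyshev's inequality. The sum `S` of the indicators has mean at least `m γ π₀` and, by
independence, variance at most `m / 4` (a variable with values in `[0, 1]` has variance at
most `1 / 4`). The event `π̂₀ ≤ π₀ - ε` forces `S` to lie `m γ ε` below its mean, so its
probability is at most `(m / 4) / (m γ ε)² = 1 / (4 m γ² ε²)`, which tends to `0`.
-/

open MeasureTheory ProbabilityTheory Filter Topology

section

variable {Ω : Type*} [MeasurableSpace Ω] {P : Measure Ω}

lemma meas_le_integral_sub_le_variance_div_sq [IsFiniteMeasure P] {S : Ω → ℝ}
    (hS : MemLp S 2 P) {c : ℝ} (hc : 0 < c) :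
    P {ω | S ω ≤ P[S] - c} ≤ ENNReal.ofReal (variance S P / c ^ 2) := by
  refine (measure_mono fun ω (hω : S ω ≤ P[S] - c) => ?_).trans
    (meas_ge_le_variance_div_sq hS hc)
  rw [Set.mem_ofPred_eq, abs_sub_comm]
  exact (le_sub_comm.mp hω).trans (le_abs_self _)

lemma variance_sum_le_of_iIndepFun_of_mem_Icc [IsProbabilityMeasure P] {ι : Type*} [Fintype ι]
    {X : ι → Ω → ℝ} {a b : ℝ} (hmeas : ∀ i, AEMeasurable (X i) P)
    (hbdd : ∀ i, ∀ᵐ ω ∂P, X i ω ∈ Set.Icc a b) (hindep : iIndepFun X P) :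
    variance (∑ i, X i) P ≤ Fintype.card ι * ((b - a) / 2) ^ 2 := by
  rw [IndepFun.variance_sum (fun i _ => memLp_of_bounded (hbdd i) (hmeas i).aestronglyMeasurable 2)
    fun i _ j _ hij => hindep.indepFun hij]
  calc ∑ i, variance (X i) P ≤ ∑ _i : ι, ((b - a) / 2) ^ 2 :=
        Finset.sum_le_sum fun i _ => variance_le_sq_of_bounded (hbdd i) (hmeas i)
    _ = Fintype.card ι * ((b - a) / 2) ^ 2 := by simp

theorem measure_qbf_estimate_le_sub_le [IsProbabilityMeasure P] {m : ℕ} (hm : 0 < m)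
    {γ π₀ ε : ℝ} (hγ : 0 < γ) (hε : 0 < ε) {X : Fin m → Ω → ℝ}
    (hmeas : ∀ i, AEMeasurable (X i) P) (hbdd : ∀ i, ∀ᵐ ω ∂P, X i ω ∈ Set.Icc 0 1)
    (hindep : iIndepFun X P) (hmean : π₀ * γ ≤ (1 / (m : ℝ)) * ∑ i, ∫ ω, X i ω ∂P) :
    P {ω | (∑ i, X i ω) / (m * γ) ≤ π₀ - ε} ≤
      ENNReal.ofReal (1 / (4 * m * γ ^ 2 * ε ^ 2)) := by
  set S := ∑ i, X i
  have hmγ : (0 : ℝ) < m * γ := by positivity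
  have hS : MemLp S 2 P :=
    memLp_finsetSum' _ fun i _ => memLp_of_bounded (hbdd i) (hmeas i).aestronglyMeasurable 2
  have hmean_S : m * γ * π₀ ≤ P[S] := by
    have hint : P[S] = ∑ i, ∫ ω, X i ω ∂P := by
      simp only [S, Finset.sum_apply]
      exact integral_finsetSum _ fun i _ =>
        (memLp_of_bounded (hbdd i) (hmeas i).aestronglyMeasurable 1).integrable le_rfl
    rw [one_div_mul_eq_div, le_div_iff₀ (by positivity)] at hmean
    linarith
  have hvar : variance S P ≤ m / 4 := by
    refine (variance_sum_le_of_iIndepFun_of_mem_Icc hmeas hbdd hindep).trans_eq ?_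
    simp only [Fintype.card_fin]
    ring
  calc P {ω | (∑ i, X i ω) / (m * γ) ≤ π₀ - ε}
      ≤ P {ω | S ω ≤ P[S] - m * γ * ε} := by
        refine measure_mono fun ω hω => ?_
        rw [Set.mem_ofPred_eq, div_le_iff₀ hmγ] at hω
        change (∑ i, X i) ω ≤ _
        rw [Finset.sum_apply]
        linarith
    _ ≤ ENNReal.ofReal (variance S P / (m * γ * ε) ^ 2) :=
        meas_le_integral_sub_le_variance_div_sq hS (by positivity)
    _ ≤ ENNReal.ofReal (1 / (4 * m * γ ^ 2 * ε ^ 2)) := by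
        refine ENNReal.ofReal_le_ofReal
          ((div_le_div_of_nonneg_right hvar (by positivity)).trans_eq ?_)
        field_simp

lemma tendsto_measure_nhds_one_of_compl_subset [IsProbabilityMeasure P] {α : Type*} {l : Filter α}
    {s t : α → Set Ω} (ht : Tendsto (fun n => P (t n)) l (𝓝 0))
    (hst : ∀ n, (s n)ᶜ ⊆ t n) :
    Tendsto (fun n => P (s n)) l (𝓝 1) := by
  have hlow : Tendsto (fun n => 1 - P (t n)) l (𝓝 1) := by
    simpa using ENNReal.Tendsto.sub tendsto_const_nhds ht (Or.inl ENNReal.one_ne_top)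
  refine tendsto_of_tendsto_of_tendsto_of_le_of_le hlow tendsto_const_nhds (fun n => ?_)
    fun n => prob_le_one
  rw [tsub_le_iff_right]
  calc 1 = P Set.univ := measure_univ.symm
    _ ≤ P (s n) + P (s n)ᶜ := measure_univ_le_add_compl _
    _ ≤ P (s n) + P (t n) := by gcongr; exact hst n

end

theorem qbf_estimate_asymptotic_upper_bound_general
    {Ω : Type*} [MeasurableSpace Ω] (P : Measure Ω) [IsProbabilityMeasure P]
    (γ : ℝ) (hγ0 : 0 < γ)
    (π₀ : ℝ)
    (X : (m : ℕ) → Fin m → Ω → ℝ)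
    (hmeas : ∀ m i, Measurable (X m i))
    (h01 : ∀ m i ω, X m i ω = 0 ∨ X m i ω = 1)
    (hindep : ∀ m, iIndepFun (X m) P)
    (hmean : ∀ m : ℕ, 1 ≤ m → π₀ * γ ≤ (1 / (m:ℝ)) * ∑ i, ∫ ω, X m i ω ∂P) :
    ∀ ε > (0:ℝ),
      (∀ m : ℕ, 1 ≤ m →
        (P {ω | (∑ i, X m i ω) / (m * γ) ≤ π₀ - ε}).toReal ≤
          1 / (4 * m * γ^2 * ε^2)) ∧
      Tendsto (fun m => P {ω | π₀ - ε ≤ (∑ i, X m i ω) / (m * γ)}) atTop (nhds 1) := by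
  intro ε hε
  have hbdd : ∀ m i, ∀ᵐ ω ∂P, X m i ω ∈ Set.Icc (0 : ℝ) 1 := fun m i =>
    ae_of_all _ fun ω => by rcases h01 m i ω with h | h <;> simp [h]
  have hbound : ∀ m, 1 ≤ m → P {ω | (∑ i, X m i ω) / (m * γ) ≤ π₀ - ε} ≤
      ENNReal.ofReal (1 / (4 * m * γ ^ 2 * ε ^ 2)) := fun m hm =>
    measure_qbf_estimate_le_sub_le hm hγ0 hε (fun i => (hmeas m i).aemeasurable) (hbdd m)
      (hindep m) (hmean m hm)
  refine ⟨fun m hm => ENNReal.toReal_le_of_le_ofReal (by positivity) (hbound m hm), ?_⟩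
  have hbound_lim : Tendsto (fun m : ℕ => ENNReal.ofReal (1 / (4 * m * γ ^ 2 * ε ^ 2)))
      atTop (𝓝 0) := by
    rw [← ENNReal.ofReal_zero]
    refine ENNReal.tendsto_ofReal ((tendsto_const_div_atTop_nhds_zero_nat
      (1 / (4 * γ ^ 2 * ε ^ 2))).congr fun m => ?_)
    field_simp
  refine tendsto_measure_nhds_one_of_compl_subset
    (tendsto_of_tendsto_of_tendsto_of_le_of_le' tendsto_const_nhds hbound_lim
      (Eventually.of_forall fun _ => zero_le) ((eventually_ge_atTop 1).mono hbound))
    fun _ _ hω => le_of_not_ge (Set.notMem_ofPred_iff.mp hω)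

/-- **Proposition 2 (Wen, 2013), finite-sample form (QBF procedure).** For each `m`,
let `X_{m,1}, …, X_{m,m}` be mutually independent `{0,1}`-valued random variables
(the indicators `I(BF_i ≤ q_{i,γ})`), `γ ∈ (0,1]`, and `π₀ ∈ [0,1]` with
`(1/m) ∑ᵢ E(X_{m,i}) ≥ π₀ γ`. Then the QBF estimate `π̂₀ = (∑ᵢ X_{m,i})/(mγ)`
satisfies `P(π̂₀ ≤ π₀ − ε) ≤ 1/(4 m γ² ε²)` for every `ε > 0`; in particular
`P(π̂₀ ≥ π₀ − ε) → 1` as `m → ∞`. -/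
theorem qbf_estimate_asymptotic_upper_bound
    {Ω : Type*} [MeasurableSpace Ω] (P : Measure Ω) [IsProbabilityMeasure P]
    (γ : ℝ) (hγ0 : 0 < γ) (hγ1 : γ ≤ 1)
    (π₀ : ℝ) (hπ₀0 : 0 ≤ π₀) (hπ₀1 : π₀ ≤ 1)
    (X : (m : ℕ) → Fin m → Ω → ℝ)
    (hmeas : ∀ m i, Measurable (X m i))
    (h01 : ∀ m i ω, X m i ω = 0 ∨ X m i ω = 1)
    (hindep : ∀ m, iIndepFun (X m) P)
    (hmean : ∀ m : ℕ, 1 ≤ m → π₀ * γ ≤ (1 / (m:ℝ)) * ∑ i, ∫ ω, X m i ω ∂P) :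
    ∀ ε > (0:ℝ),
      (∀ m : ℕ, 1 ≤ m →
        (P {ω | (∑ i, X m i ω) / (m * γ) ≤ π₀ - ε}).toReal ≤
          1 / (4 * m * γ^2 * ε^2)) ∧
      Tendsto (fun m => P {ω | π₀ - ε ≤ (∑ i, X m i ω) / (m * γ)}) atTop (nhds 1) :=
  qbf_estimate_asymptotic_upper_bound_general P γ hγ0 π₀ X hmeas h01 hindep hmean
end
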